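/- Let κ be a Markov kernel on a measurable space E, ψ a probability measure on E, and ε ∈ (0, 1], such that κ(x, A) ≥ ε · ψ(A) for every x ∈ E and every measurable A, and let π be an invariant probability measure for κ. Then for every probability measure μ on E and every n ≥ 0, ‖μκⁿ − π‖_TV ≤ (1 − ε)ⁿ · ‖μ − π‖_TV, where μκⁿ denotes n successive applications of the kernel to μ. In particular, for every x ∈ E the n-step law Kⁿ(x, ·) started from the Dirac measure at x converges to π in total variation as n → ∞. -/

import Mathlib

open MeasureTheory ProbabilityTheory Filter

/-- The total variation distance `‖μ − ν‖_TV = |μ − ν|(E)` between two (finite) measures,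
expressed via the Jordan decomposition of `μ − ν`: the measure-theoretic truncated
differences `μ - ν` and `ν - μ` are exactly the positive and negative parts of the
signed measure `μ − ν`, so `|μ − ν|(E) = (μ - ν)(E) + (ν - μ)(E)`. -/
noncomputable def tvDist {E : Type*} [MeasurableSpace E] (μ ν : Measure E) : ENNReal :=
  (μ - ν) Set.univ + (ν - μ) Set.univ

/-- `kernelIterate κ μ n = μκⁿ`, the result of `n` successive applications of the
kernel `κ` to the measure `μ`, where one application is the pushforward
`μκ(A) = ∫ κ(x, A) dμ(x)`, i.e. `μ.bind κ`. -/
noncomputable def kernelIterate {E : Type*} [MeasurableSpace E]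
    (κ : Kernel E E) (μ : Measure E) : ℕ → Measure E
  | 0 => μ
  | n + 1 => (kernelIterate κ μ n).bind κ

/-!
Split two measures of equal mass as `μ = c + P`, `ν = c + Q` with `c` their common part and
`P = μ - ν`, `Q = ν - μ` the two halves of the Jordan decomposition of `μ - ν`, both of mass `δ`.
By minorization `κ ∘ₘ P` and `κ ∘ₘ Q` both dominate `εδ • ψ`; this shared mass cancels in
`κ ∘ₘ μ - κ ∘ₘ ν`, so each half of the total variation shrinks from `δ` to `(1 - ε)δ`. Since `π`
is invariant, iterating gives the geometric bound, and `(1 - ε)ⁿ → 0` because `ε > 0`.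
-/

namespace MeasureTheory

variable {E : Type*} [MeasurableSpace E] {μ ν : Measure E}

lemma IsHahnDecomposition.restrict_add_restrict_compl_add_sub [IsFiniteMeasure ν] {s : Set E}
    (hs : IsHahnDecomposition μ ν s) : μ.restrict s + ν.restrict sᶜ + (μ - ν) = μ := by
  have hsub : μ - ν = μ.restrict sᶜ - ν.restrict sᶜ := by
    calc μ - ν = (μ - ν).restrict s + (μ - ν).restrict sᶜ :=
          (Measure.restrict_add_restrict_compl hs.measurableSet).symm
      _ = μ.restrict sᶜ - ν.restrict sᶜ := by
          rw [Measure.restrict_eq_zero.mpr (Measure.sub_apply_eq_zero_of_isHahnDecomposition hs),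
            zero_add, Measure.restrict_sub_eq_restrict_sub_restrict hs.measurableSet.compl]
  rw [hsub, add_assoc, add_comm (ν.restrict sᶜ), Measure.sub_add_cancel_of_le hs.ge_on_compl,
    Measure.restrict_add_restrict_compl hs.measurableSet]

lemma Measure.exists_add_sub_eq_and_add_sub_eq [IsFiniteMeasure μ] [IsFiniteMeasure ν] :
    ∃ c : Measure E, c + (μ - ν) = μ ∧ c + (ν - μ) = ν := by
  obtain ⟨s, hs⟩ := exists_isHahnDecomposition μ ν
  refine ⟨μ.restrict s + ν.restrict sᶜ, hs.restrict_add_restrict_compl_add_sub, ?_⟩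
  simpa only [compl_compl, add_comm (μ.restrict s)] using
    hs.compl.restrict_add_restrict_compl_add_sub

lemma Measure.sub_apply_univ_eq_of_measure_univ_eq [IsFiniteMeasure μ] [IsFiniteMeasure ν]
    (h : μ Set.univ = ν Set.univ) : (μ - ν) Set.univ = (ν - μ) Set.univ := by
  obtain ⟨c, hμ, hν⟩ := exists_add_sub_eq_and_add_sub_eq (μ := μ) (ν := ν)
  have : IsFiniteMeasure c := isFiniteMeasure_of_le μ ((Measure.le_add_right le_rfl).trans_eq hμ)
  refine (ENNReal.add_right_inj (measure_ne_top c Set.univ)).mp ?_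
  rw [← Measure.add_apply, ← Measure.add_apply, hμ, hν, h]

end MeasureTheory

section Doeblin

variable {E : Type*} [MeasurableSpace E]

lemma smul_le_comp_of_minorization {κ : Kernel E E} {ψ : Measure E} {ε : NNReal}
    (hmin : ∀ (x : E) (A : Set E), MeasurableSet A → (ε : ENNReal) * ψ A ≤ κ x A)
    (R : Measure E) : ((ε : ENNReal) * R Set.univ) • ψ ≤ κ ∘ₘ R := by
  refine Measure.le_iff.2 fun A hA => ?_
  calc (((ε : ENNReal) * R Set.univ) • ψ) A = ∫⁻ _, (ε : ENNReal) * ψ A ∂ R := by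
        rw [Measure.smul_apply, smul_eq_mul, lintegral_const]; ring
    _ ≤ ∫⁻ x, κ x A ∂ R := lintegral_mono fun x => hmin x A hA
    _ = (κ ∘ₘ R) A := (Measure.bind_apply hA κ.aemeasurable).symm

lemma comp_sub_comp_apply_univ_le {κ : Kernel E E} [IsMarkovKernel κ] {ψ : Measure E}
    [IsProbabilityMeasure ψ] {ε : NNReal}
    (hmin : ∀ (x : E) (A : Set E), MeasurableSet A → (ε : ENNReal) * ψ A ≤ κ x A)
    {μ ν : Measure E} [IsFiniteMeasure μ] [IsFiniteMeasure ν] (h : μ Set.univ = ν Set.univ) :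
    (κ ∘ₘ μ - κ ∘ₘ ν) Set.univ ≤ ((1 - ε : NNReal) : ENNReal) * (μ - ν) Set.univ := by
  obtain ⟨c, hμ, hν⟩ := Measure.exists_add_sub_eq_and_add_sub_eq (μ := μ) (ν := ν)
  set δ := (μ - ν) Set.univ
  have hδ : δ ≠ ⊤ := measure_ne_top _ _
  set η := ((ε : ENNReal) * δ) • ψ
  have : IsFiniteMeasure η := Measure.smul_finite ψ (ENNReal.mul_ne_top ENNReal.coe_ne_top hδ)
  have hηP : η ≤ κ ∘ₘ (μ - ν) := smul_le_comp_of_minorization hmin _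
  have hηQ : η ≤ κ ∘ₘ (ν - μ) := by
    simpa only [η, δ, Measure.sub_apply_univ_eq_of_measure_univ_eq h] using
      smul_le_comp_of_minorization hmin (ν - μ)
  have hle : κ ∘ₘ μ ≤ (κ ∘ₘ (μ - ν) - η) + κ ∘ₘ ν := by
    calc κ ∘ₘ μ = κ ∘ₘ c + ((κ ∘ₘ (μ - ν) - η) + η) := by
          rw [Measure.sub_add_cancel_of_le hηP, ← Measure.comp_add, hμ]
      _ = (κ ∘ₘ (μ - ν) - η) + (κ ∘ₘ c + η) := add_left_comm _ _ _
      _ ≤ (κ ∘ₘ (μ - ν) - η) + (κ ∘ₘ c + κ ∘ₘ (ν - μ)) := by gcongr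
      _ = (κ ∘ₘ (μ - ν) - η) + κ ∘ₘ ν := by rw [← Measure.comp_add, hν]
  calc (κ ∘ₘ μ - κ ∘ₘ ν) Set.univ ≤ (κ ∘ₘ (μ - ν) - η) Set.univ :=
        Measure.le_iff'.1 (Measure.sub_le_of_le_add hle) _
    _ = δ - (ε : ENNReal) * δ := by
        rw [Measure.sub_apply .univ hηP, Measure.comp_apply_univ, Measure.smul_apply,
          measure_univ (μ := ψ), smul_eq_mul, mul_one]
    _ = ((1 - ε : NNReal) : ENNReal) * δ := by
        rw [ENNReal.coe_sub, ENNReal.sub_mul fun _ _ => hδ, ENNReal.coe_one, one_mul]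

lemma tvDist_comp_le {κ : Kernel E E} [IsMarkovKernel κ] {ψ : Measure E}
    [IsProbabilityMeasure ψ] {ε : NNReal}
    (hmin : ∀ (x : E) (A : Set E), MeasurableSet A → (ε : ENNReal) * ψ A ≤ κ x A)
    {μ ν : Measure E} [IsFiniteMeasure μ] [IsFiniteMeasure ν] (h : μ Set.univ = ν Set.univ) :
    tvDist (κ ∘ₘ μ) (κ ∘ₘ ν) ≤ ((1 - ε : NNReal) : ENNReal) * tvDist μ ν := by
  rw [tvDist, tvDist, mul_add]
  exact add_le_add (comp_sub_comp_apply_univ_le hmin h) (comp_sub_comp_apply_univ_le hmin h.symm)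

instance isProbabilityMeasure_kernelIterate (κ : Kernel E E) [IsMarkovKernel κ]
    (μ : Measure E) [IsProbabilityMeasure μ] (n : ℕ) :
    IsProbabilityMeasure (kernelIterate κ μ n) := by
  induction n with
  | zero => assumption
  | succ n ih => exact inferInstanceAs (IsProbabilityMeasure (κ ∘ₘ kernelIterate κ μ n))

lemma tvDist_kernelIterate_le {κ : Kernel E E} [IsMarkovKernel κ] {ψ : Measure E}
    [IsProbabilityMeasure ψ] {ε : NNReal}
    (hmin : ∀ (x : E) (A : Set E), MeasurableSet A → (ε : ENNReal) * ψ A ≤ κ x A)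
    (μ ν : Measure E) [IsProbabilityMeasure μ] [IsProbabilityMeasure ν] (n : ℕ) :
    tvDist (kernelIterate κ μ n) (kernelIterate κ ν n)
      ≤ ((1 - ε : NNReal) : ENNReal) ^ n * tvDist μ ν := by
  induction n with
  | zero => simp [kernelIterate]
  | succ n ih =>
    calc tvDist (kernelIterate κ μ (n + 1)) (kernelIterate κ ν (n + 1))
        ≤ ((1 - ε : NNReal) : ENNReal) * tvDist (kernelIterate κ μ n) (kernelIterate κ ν n) :=
          tvDist_comp_le hmin (by simp)
      _ ≤ ((1 - ε : NNReal) : ENNReal) ^ (n + 1) * tvDist μ ν := by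
          rw [pow_succ', mul_assoc]; gcongr

lemma kernelIterate_eq_self {κ : Kernel E E} {π : Measure E} (hπ : κ ∘ₘ π = π) (n : ℕ) :
    kernelIterate κ π n = π := by
  induction n with
  | zero => rfl
  | succ n ih => exact (congrArg (κ ∘ₘ ·) ih).trans hπ

lemma tvDist_ne_top {μ ν : Measure E} [IsFiniteMeasure μ] [IsFiniteMeasure ν] :
    tvDist μ ν ≠ ⊤ :=
  ENNReal.add_ne_top.2 ⟨measure_ne_top _ _, measure_ne_top _ _⟩

end Doeblin

theorem doeblin_geometric_ergodicity_general
    {E : Type*} [MeasurableSpace E]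
    (κ : Kernel E E) [IsMarkovKernel κ]
    (ψ : Measure E) [IsProbabilityMeasure ψ]
    (ε : NNReal) (hε0 : 0 < ε)
    (hmin : ∀ (x : E) (A : Set E), MeasurableSet A → (ε : ENNReal) * ψ A ≤ κ x A)
    (π : Measure E) [IsProbabilityMeasure π]
    (hπ : ∀ A : Set E, MeasurableSet A → π A = ∫⁻ x, κ x A ∂π) :
    (∀ (μ : Measure E), IsProbabilityMeasure μ → ∀ n : ℕ,
        tvDist (kernelIterate κ μ n) π
          ≤ ((1 - ε : NNReal) : ENNReal) ^ n * tvDist μ π) ∧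
      ∀ x : E, Tendsto (fun n : ℕ => tvDist (kernelIterate κ (Measure.dirac x) n) π)
        atTop (nhds 0) := by
  have hinv : κ ∘ₘ π = π := by
    ext A hA
    rw [Measure.bind_apply hA κ.aemeasurable, hπ A hA]
  have hcontract (μ : Measure E) [IsProbabilityMeasure μ] (n : ℕ) :
      tvDist (kernelIterate κ μ n) π ≤ ((1 - ε : NNReal) : ENNReal) ^ n * tvDist μ π := by
    simpa only [kernelIterate_eq_self hinv] using tvDist_kernelIterate_le hmin μ π n
  refine ⟨fun μ _ => hcontract μ, fun x => ?_⟩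
  have hrate : ((1 - ε : NNReal) : ENNReal) < 1 := by exact_mod_cast tsub_lt_self one_pos hε0
  have hlim := ENNReal.Tendsto.mul_const (ENNReal.tendsto_pow_atTop_nhds_zero_of_lt_one hrate)
    (Or.inr (tvDist_ne_top (μ := Measure.dirac x) (ν := π)))
  rw [zero_mul] at hlim
  exact tendsto_of_tendsto_of_tendsto_of_le_of_le tendsto_const_nhds hlim
    (fun _ => zero_le) (hcontract (Measure.dirac x))

/-- **Geometric ergodicity under Doeblin minorization.** If a Markov kernel `κ` satisfies
`κ(x, A) ≥ ε · ψ(A)` for a probability measure `ψ` and `ε ∈ (0, 1]`, and `π` is an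
invariant probability measure for `κ`, then for every probability measure `μ` and every
`n ≥ 0`, `‖μκⁿ − π‖_TV ≤ (1 − ε)ⁿ · ‖μ − π‖_TV`. In particular, for every `x ∈ E` the
`n`-step law `Kⁿ(x, ·)` started from the Dirac measure at `x` converges to `π` in total
variation as `n → ∞`. -/
theorem doeblin_geometric_ergodicity
    {E : Type*} [MeasurableSpace E]
    (κ : Kernel E E) [IsMarkovKernel κ]
    (ψ : Measure E) [IsProbabilityMeasure ψ]
    (ε : NNReal) (hε0 : 0 < ε) (hε1 : ε ≤ 1)
    (hmin : ∀ (x : E) (A : Set E), MeasurableSet A → (ε : ENNReal) * ψ A ≤ κ x A)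
    (π : Measure E) [IsProbabilityMeasure π]
    (hπ : ∀ A : Set E, MeasurableSet A → π A = ∫⁻ x, κ x A ∂π) :
    (∀ (μ : Measure E), IsProbabilityMeasure μ → ∀ n : ℕ,
        tvDist (kernelIterate κ μ n) π
          ≤ ((1 - ε : NNReal) : ENNReal) ^ n * tvDist μ π) ∧
      ∀ x : E, Tendsto (fun n : ℕ => tvDist (kernelIterate κ (Measure.dirac x) n) π)
        atTop (nhds 0) :=
  doeblin_geometric_ergodicity_general κ ψ ε hε0 hmin π hπ
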